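/- For all ordinals ε and δ and every natural number n, (ε ⨳ ω) ♯ (δ ⨳ n) ≤ (ε + δ) ⨳ ω, where + denotes ordinary ordinal addition and ω is the first infinite ordinal. -/

import Mathlib

namespace Ordinal

universe u

/-- Natural addition (Hessenberg sum), as in Mathlib's former `Ordinal.nadd`. -/
noncomputable def nadd : Ordinal.{u} → Ordinal.{u} → Ordinal.{u}
  | a, b =>
    max (blsub.{u, u} a fun a' _ => nadd a' b) (blsub.{u, u} b fun b' _ => nadd a b')
termination_by o₁ o₂ => (o₁, o₂)

end Ordinal

namespace NaturalOps

scoped infixl:65 " ♯ " => Ordinal.nadd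

end NaturalOps

open NaturalOps

namespace Ordinal

universe u

/-- Natural multiplication (Hessenberg product), as in Mathlib's former `Ordinal.nmul`. -/
noncomputable def nmul : Ordinal.{u} → Ordinal.{u} → Ordinal.{u}
  | a, b => sInf {c | ∀ a' < a, ∀ b' < b, nmul a' b ♯ nmul a b' < c ♯ nmul a' b'}
termination_by a b => (a, b)

end Ordinal

namespace NaturalOps

scoped infixl:70 " ⨳ " => Ordinal.nmul

end NaturalOps

open NaturalOps Ordinal

namespace Ordinal

universe v

theorem nadd_def (a b : Ordinal.{v}) : a ♯ b =
    max (blsub.{v, v} a fun a' _ => a' ♯ b) (blsub.{v, v} b fun b' _ => a ♯ b') := by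
  rw [nadd]

theorem lt_nadd_iff {a b c : Ordinal.{v}} :
    a < b ♯ c ↔ (∃ b' < b, a ≤ b' ♯ c) ∨ ∃ c' < c, a ≤ b ♯ c' := by
  rw [nadd_def]
  simp [lt_blsub_iff]

theorem nadd_le_iff {a b c : Ordinal.{v}} :
    b ♯ c ≤ a ↔ (∀ b' < b, b' ♯ c < a) ∧ ∀ c' < c, b ♯ c' < a := by
  rw [nadd_def]
  simp [blsub_le_iff]

theorem nadd_lt_nadd_left {b c : Ordinal.{v}} (h : b < c) (a : Ordinal.{v}) : a ♯ b < a ♯ c :=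
  lt_nadd_iff.2 (Or.inr ⟨b, h, le_rfl⟩)

theorem nadd_lt_nadd_right {b c : Ordinal.{v}} (h : b < c) (a : Ordinal.{v}) : b ♯ a < c ♯ a :=
  lt_nadd_iff.2 (Or.inl ⟨b, h, le_rfl⟩)

theorem nadd_le_nadd_left {b c : Ordinal.{v}} (h : b ≤ c) (a : Ordinal.{v}) : a ♯ b ≤ a ♯ c := by
  rcases h.lt_or_eq with h | rfl
  · exact (nadd_lt_nadd_left h a).le
  · exact le_rfl

theorem nadd_le_nadd_right {b c : Ordinal.{v}} (h : b ≤ c) (a : Ordinal.{v}) : b ♯ a ≤ c ♯ a := by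
  rcases h.lt_or_eq with h | rfl
  · exact (nadd_lt_nadd_right h a).le
  · exact le_rfl

theorem nadd_le_nadd {a b c d : Ordinal.{v}} (h₁ : a ≤ b) (h₂ : c ≤ d) : a ♯ c ≤ b ♯ d :=
  (nadd_le_nadd_left h₂ a).trans (nadd_le_nadd_right h₁ d)

theorem lt_of_nadd_lt_nadd_right {a b c : Ordinal.{v}} (h : a ♯ c < b ♯ c) : a < b :=
  not_le.1 fun h' => (not_lt.2 (nadd_le_nadd_right h' c)) h

theorem nadd_comm (a b : Ordinal.{v}) : a ♯ b = b ♯ a := by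
  induction a using Ordinal.induction generalizing b with
  | _ a IHa =>
  induction b using Ordinal.induction with
  | _ b IHb =>
  apply le_antisymm
  · refine nadd_le_iff.2 ⟨fun a' ha' => ?_, fun b' hb' => ?_⟩
    · rw [IHa a' ha' b]; exact nadd_lt_nadd_left ha' b
    · rw [IHb b' hb']; exact nadd_lt_nadd_right hb' a
  · refine nadd_le_iff.2 ⟨fun b' hb' => ?_, fun a' ha' => ?_⟩
    · rw [← IHb b' hb']; exact nadd_lt_nadd_left hb' a
    · rw [← IHa a' ha' b]; exact nadd_lt_nadd_right ha' b

theorem nadd_assoc (a b c : Ordinal.{v}) : a ♯ b ♯ c = a ♯ (b ♯ c) := by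
  induction a using Ordinal.induction generalizing b c with
  | _ a IHa =>
  induction b using Ordinal.induction generalizing c with
  | _ b IHb =>
  induction c using Ordinal.induction with
  | _ c IHc =>
  apply le_antisymm
  · refine nadd_le_iff.2 ⟨fun d hd => ?_, fun c' hc' => ?_⟩
    · rcases lt_nadd_iff.1 hd with ⟨a', ha', h⟩ | ⟨b', hb', h⟩
      · calc d ♯ c ≤ a' ♯ b ♯ c := nadd_le_nadd_right h c
          _ = a' ♯ (b ♯ c) := IHa a' ha' b c
          _ < a ♯ (b ♯ c) := nadd_lt_nadd_right ha' _
      · calc d ♯ c ≤ a ♯ b' ♯ c := nadd_le_nadd_right h c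
          _ = a ♯ (b' ♯ c) := IHb b' hb' c
          _ < a ♯ (b ♯ c) := nadd_lt_nadd_left (nadd_lt_nadd_right hb' c) _
    · rw [IHc c' hc']
      exact nadd_lt_nadd_left (nadd_lt_nadd_left hc' b) _
  · refine nadd_le_iff.2 ⟨fun a' ha' => ?_, fun d hd => ?_⟩
    · rw [← IHa a' ha' b c]
      exact nadd_lt_nadd_right (nadd_lt_nadd_right ha' b) _
    · rcases lt_nadd_iff.1 hd with ⟨b', hb', h⟩ | ⟨c', hc', h⟩
      · calc a ♯ d ≤ a ♯ (b' ♯ c) := nadd_le_nadd_left h a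
          _ = a ♯ b' ♯ c := (IHb b' hb' c).symm
          _ < a ♯ b ♯ c := nadd_lt_nadd_right (nadd_lt_nadd_left hb' a) _
      · calc a ♯ d ≤ a ♯ (b ♯ c') := nadd_le_nadd_left h a
          _ = a ♯ b ♯ c' := (IHc c' hc').symm
          _ < a ♯ b ♯ c := nadd_lt_nadd_left hc' _

instance nadd_isAssociative : Std.Associative (α := Ordinal.{v}) Ordinal.nadd := ⟨nadd_assoc⟩

instance nadd_isCommutative : Std.Commutative (α := Ordinal.{v}) Ordinal.nadd := ⟨nadd_comm⟩

theorem nadd_left_comm (a b c : Ordinal.{v}) : a ♯ (b ♯ c) = b ♯ (a ♯ c) := by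
  rw [← nadd_assoc, nadd_comm a b, nadd_assoc]

@[simp]
theorem nadd_zero (a : Ordinal.{v}) : a ♯ 0 = a := by
  induction a using Ordinal.induction with
  | _ a IH =>
  apply le_antisymm
  · refine nadd_le_iff.2 ⟨fun a' ha' => ?_, fun c' hc' => ?_⟩
    · rw [IH a' ha']; exact ha'
    · exact absurd hc' (not_lt.2 (zero_le : 0 ≤ c'))
  · refine le_of_forall_lt fun c hc => ?_
    rw [← IH c hc]
    exact nadd_lt_nadd_right hc 0

@[simp]
theorem zero_nadd (a : Ordinal.{v}) : 0 ♯ a = a := by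
  rw [nadd_comm, nadd_zero]

theorem le_self_nadd {a b : Ordinal.{v}} : a ≤ a ♯ b := by
  simpa using nadd_le_nadd_left (zero_le : 0 ≤ b) a

theorem nadd_one (a : Ordinal.{v}) : a ♯ 1 = Order.succ a := by
  induction a using Ordinal.induction with
  | _ a IH =>
  apply le_antisymm
  · refine nadd_le_iff.2 ⟨fun a' ha' => ?_, fun c' hc' => ?_⟩
    · rw [IH a' ha']; exact Order.succ_lt_succ ha'
    · rw [Ordinal.lt_one_iff_zero.1 hc', nadd_zero]; exact Order.lt_succ a
  · refine Order.succ_le_of_lt ?_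
    simpa using nadd_lt_nadd_left zero_lt_one a

theorem add_le_nadd (a b : Ordinal.{v}) : a + b ≤ a ♯ b := by
  induction b using Ordinal.induction with
  | _ b IH =>
  refine le_of_forall_lt fun c hc => ?_
  rcases lt_or_ge c a with h | h
  · exact h.trans_le le_self_nadd
  · have hd : c - a < b := by
      rw [← Ordinal.add_sub_cancel_of_le h] at hc
      exact lt_of_add_lt_add_left hc
    calc c = a + (c - a) := (Ordinal.add_sub_cancel_of_le h).symm
      _ ≤ a ♯ (c - a) := IH _ hd
      _ < a ♯ b := nadd_lt_nadd_left hd a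

theorem nmul_def (a b : Ordinal.{v}) :
    a ⨳ b = sInf {c | ∀ a' < a, ∀ b' < b, a' ⨳ b ♯ a ⨳ b' < c ♯ a' ⨳ b'} := by
  rw [nmul]

theorem nmul_nonempty (a b : Ordinal.{v}) :
    {c : Ordinal.{v} | ∀ a' < a, ∀ b' < b, a' ⨳ b ♯ a ⨳ b' < c ♯ a' ⨳ b'}.Nonempty := by
  refine ⟨blsub.{v, v} a fun a' _ => blsub.{v, v} b fun b' _ => a' ⨳ b ♯ a ⨳ b', ?_⟩
  intro a' ha' b' hb'
  refine lt_of_lt_of_le ?_ le_self_nadd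
  exact (lt_blsub.{v, v} (fun b' _ => a' ⨳ b ♯ a ⨳ b') b' hb').trans
    (lt_blsub.{v, v} (fun a' _ => blsub.{v, v} b fun b' _ => a' ⨳ b ♯ a ⨳ b') a' ha')

theorem nmul_nadd_lt {a b a' b' : Ordinal.{v}} (ha : a' < a) (hb : b' < b) :
    a' ⨳ b ♯ a ⨳ b' < a ⨳ b ♯ a' ⨳ b' := by
  rw [nmul_def a b]
  exact csInf_mem (nmul_nonempty a b) a' ha b' hb

theorem nmul_nadd_le {a b a' b' : Ordinal.{v}} (ha : a' ≤ a) (hb : b' ≤ b) :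
    a' ⨳ b ♯ a ⨳ b' ≤ a ⨳ b ♯ a' ⨳ b' := by
  rcases ha.lt_or_eq with ha | rfl
  · rcases hb.lt_or_eq with hb | rfl
    · exact (nmul_nadd_lt ha hb).le
    · rw [nadd_comm]
  · exact le_rfl

theorem lt_nmul_iff {a b c : Ordinal.{v}} :
    c < a ⨳ b ↔ ∃ a' < a, ∃ b' < b, c ♯ a' ⨳ b' ≤ a' ⨳ b ♯ a ⨳ b' := by
  refine ⟨fun h => ?_, ?_⟩
  · rw [nmul_def] at h
    have := notMem_of_lt_csInf h (OrderBot.bddBelow _)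
    simp only [Set.mem_setOf_eq, not_forall, not_lt] at this
    obtain ⟨a', ha', b', hb', h'⟩ := this
    exact ⟨a', ha', b', hb', h'⟩
  · rintro ⟨a', ha, b', hb, h⟩
    exact lt_of_nadd_lt_nadd_right (h.trans_lt (nmul_nadd_lt ha hb))

theorem nmul_le_iff {a b c : Ordinal.{v}} :
    a ⨳ b ≤ c ↔ ∀ a' < a, ∀ b' < b, a' ⨳ b ♯ a ⨳ b' < c ♯ a' ⨳ b' := by
  rw [← not_iff_not, not_le, lt_nmul_iff]
  simp only [not_forall, not_lt, exists_prop]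

theorem nmul_comm (a b : Ordinal.{v}) : a ⨳ b = b ⨳ a := by
  induction a using Ordinal.induction generalizing b with
  | _ a IHa =>
  induction b using Ordinal.induction with
  | _ b IHb =>
  rw [nmul_def a b, nmul_def b a]
  congr 1
  ext x
  constructor
  · intro H b' hb' a' ha'
    rw [← IHb b' hb', ← IHa a' ha', ← IHa a' ha', nadd_comm (a ⨳ b')]
    exact H a' ha' b' hb'
  · intro H a' ha' b' hb'
    rw [IHb b' hb', IHa a' ha', IHa a' ha', nadd_comm (b ⨳ a')]
    exact H b' hb' a' ha'

@[simp]
theorem nmul_zero (a : Ordinal.{v}) : a ⨳ 0 = 0 :=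
  le_antisymm (nmul_le_iff.2 fun _ _ b' hb' => absurd hb' (not_lt.2 (zero_le : 0 ≤ b'))) (zero_le : 0 ≤ a ⨳ 0)

@[simp]
theorem zero_nmul (a : Ordinal.{v}) : 0 ⨳ a = 0 := by
  rw [nmul_comm, nmul_zero]

@[simp]
theorem nmul_one (a : Ordinal.{v}) : a ⨳ 1 = a := by
  induction a using Ordinal.induction with
  | _ a IH =>
  apply le_antisymm
  · refine nmul_le_iff.2 fun a' ha' b' hb' => ?_
    rw [Ordinal.lt_one_iff_zero.1 hb', IH a' ha']
    simpa using ha'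
  · refine le_of_forall_lt fun c hc => ?_
    refine lt_nmul_iff.2 ⟨c, hc, 0, zero_lt_one, ?_⟩
    rw [IH c hc]
    simp

@[simp]
theorem one_nmul (a : Ordinal.{v}) : 1 ⨳ a = a := by
  rw [nmul_comm, nmul_one]

theorem nmul_lt_nmul_of_pos_left {a b c : Ordinal.{v}} (h₁ : a < b) (h₂ : 0 < c) :
    c ⨳ a < c ⨳ b :=
  lt_nmul_iff.2 ⟨0, h₂, a, h₁, by simp⟩

theorem nmul_le_nmul_left {a b : Ordinal.{v}} (h : a ≤ b) (c : Ordinal.{v}) : c ⨳ a ≤ c ⨳ b := by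
  rcases h.lt_or_eq with h₁ | rfl
  · rcases eq_or_ne c 0 with rfl | h₂
    · simp
    · exact (nmul_lt_nmul_of_pos_left h₁ (lt_of_le_of_ne (zero_le : 0 ≤ c) h₂.symm)).le
  · exact le_rfl

theorem nmul_le_nmul_right {a b : Ordinal.{v}} (h : a ≤ b) (c : Ordinal.{v}) : a ⨳ c ≤ b ⨳ c := by
  rw [nmul_comm, nmul_comm b]
  exact nmul_le_nmul_left h c

theorem nmul_nadd (a b c : Ordinal.{v}) : a ⨳ (b ♯ c) = a ⨳ b ♯ a ⨳ c := by
  induction a using Ordinal.induction generalizing b c with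
  | _ a IHa =>
  induction b using Ordinal.induction generalizing c with
  | _ b IHb =>
  induction c using Ordinal.induction with
  | _ c IHc =>
  apply le_antisymm
  · rw [nmul_le_iff]
    intro a' ha' d hd
    rw [IHa a' ha' b c]
    rcases lt_nadd_iff.1 hd with ⟨b', hb', hdb⟩ | ⟨c', hc', hdc⟩
    · have h1 := nmul_nadd_le ha'.le hdb
      have h2 := nmul_nadd_lt ha' hb'
      rw [IHa a' ha' b' c, IHb b' hb' c] at h1
      apply lt_of_nadd_lt_nadd_right (c := a' ⨳ b' ♯ a' ⨳ c)
      calc a' ⨳ b ♯ a' ⨳ c ♯ a ⨳ d ♯ (a' ⨳ b' ♯ a' ⨳ c)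
          = (a' ⨳ b ♯ a' ⨳ c) ♯ ((a' ⨳ b' ♯ a' ⨳ c) ♯ a ⨳ d) := by ac_rfl
        _ ≤ (a' ⨳ b ♯ a' ⨳ c) ♯ ((a ⨳ b' ♯ a ⨳ c) ♯ a' ⨳ d) := nadd_le_nadd_left h1 _
        _ = (a' ⨳ b ♯ a ⨳ b') ♯ (a' ⨳ c ♯ a ⨳ c ♯ a' ⨳ d) := by ac_rfl
        _ < (a ⨳ b ♯ a' ⨳ b') ♯ (a' ⨳ c ♯ a ⨳ c ♯ a' ⨳ d) := nadd_lt_nadd_right h2 _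
        _ = a ⨳ b ♯ a ⨳ c ♯ a' ⨳ d ♯ (a' ⨳ b' ♯ a' ⨳ c) := by ac_rfl
    · have h1 := nmul_nadd_le ha'.le hdc
      have h2 := nmul_nadd_lt ha' hc'
      rw [IHa a' ha' b c', IHc c' hc'] at h1
      apply lt_of_nadd_lt_nadd_right (c := a' ⨳ b ♯ a' ⨳ c')
      calc a' ⨳ b ♯ a' ⨳ c ♯ a ⨳ d ♯ (a' ⨳ b ♯ a' ⨳ c')
          = (a' ⨳ b ♯ a' ⨳ c) ♯ ((a' ⨳ b ♯ a' ⨳ c') ♯ a ⨳ d) := by ac_rfl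
        _ ≤ (a' ⨳ b ♯ a' ⨳ c) ♯ ((a ⨳ b ♯ a ⨳ c') ♯ a' ⨳ d) := nadd_le_nadd_left h1 _
        _ = (a' ⨳ c ♯ a ⨳ c') ♯ (a' ⨳ b ♯ a ⨳ b ♯ a' ⨳ d) := by ac_rfl
        _ < (a ⨳ c ♯ a' ⨳ c') ♯ (a' ⨳ b ♯ a ⨳ b ♯ a' ⨳ d) := nadd_lt_nadd_right h2 _
        _ = a ⨳ b ♯ a ⨳ c ♯ a' ⨳ d ♯ (a' ⨳ b ♯ a' ⨳ c') := by ac_rfl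
  · refine nadd_le_iff.2 ⟨fun d hd => ?_, fun d hd => ?_⟩
    · obtain ⟨a', ha', b', hb', h⟩ := lt_nmul_iff.1 hd
      refine lt_nmul_iff.2 ⟨a', ha', b' ♯ c, nadd_lt_nadd_right hb' c, ?_⟩
      rw [IHa a' ha' b' c, IHa a' ha' b c, IHb b' hb' c]
      calc d ♯ a ⨳ c ♯ (a' ⨳ b' ♯ a' ⨳ c)
          = (d ♯ a' ⨳ b') ♯ (a ⨳ c ♯ a' ⨳ c) := by ac_rfl
        _ ≤ (a' ⨳ b ♯ a ⨳ b') ♯ (a ⨳ c ♯ a' ⨳ c) := nadd_le_nadd_right h _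
        _ = a' ⨳ b ♯ a' ⨳ c ♯ (a ⨳ b' ♯ a ⨳ c) := by ac_rfl
    · obtain ⟨a', ha', c', hc', h⟩ := lt_nmul_iff.1 hd
      refine lt_nmul_iff.2 ⟨a', ha', b ♯ c', nadd_lt_nadd_left hc' b, ?_⟩
      rw [IHa a' ha' b c', IHa a' ha' b c, IHc c' hc']
      calc a ⨳ b ♯ d ♯ (a' ⨳ b ♯ a' ⨳ c')
          = (d ♯ a' ⨳ c') ♯ (a ⨳ b ♯ a' ⨳ b) := by ac_rfl
        _ ≤ (a' ⨳ c ♯ a ⨳ c') ♯ (a ⨳ b ♯ a' ⨳ b) := nadd_le_nadd_right h _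
        _ = a' ⨳ b ♯ a' ⨳ c ♯ (a ⨳ b ♯ a ⨳ c') := by ac_rfl

theorem nadd_nmul (a b c : Ordinal.{v}) : (a ♯ b) ⨳ c = a ⨳ c ♯ b ⨳ c := by
  rw [nmul_comm (a ♯ b), nmul_nadd, nmul_comm c a, nmul_comm c b]

theorem nmul_add_one (a b : Ordinal.{v}) : a ⨳ (b + 1) = a ⨳ b ♯ a := by
  rw [Ordinal.add_one_eq_succ, ← nadd_one, nmul_nadd, nmul_one]

theorem nadd_one_nmul (a b : Ordinal.{v}) : (a ♯ 1) ⨳ b = a ⨳ b ♯ b := by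
  rw [nadd_nmul, one_nmul]

theorem mul_le_nmul (a b : Ordinal.{v}) : a * b ≤ a ⨳ b := by
  induction b using Ordinal.induction with
  | _ b IH =>
  rcases eq_or_ne a 0 with rfl | ha
  · simp
  refine le_of_forall_lt fun c hc => ?_
  have hq : c / a < b := (Ordinal.div_lt ha).2 hc
  have hr : c % a < a := Ordinal.mod_lt c ha
  calc c = a * (c / a) + c % a := (Ordinal.div_add_mod c a).symm
    _ ≤ a ⨳ (c / a) + c % a := add_le_add (IH _ hq) le_rfl
    _ ≤ a ⨳ (c / a) ♯ c % a := add_le_nadd _ _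
    _ < a ⨳ (c / a) ♯ a := nadd_lt_nadd_left hr _
    _ = a ⨳ (c / a + 1) := (nmul_add_one _ _).symm
    _ ≤ a ⨳ b := nmul_le_nmul_left (Order.add_one_le_of_lt hq) _

theorem nmul_nat_nmul_comm (a b : Ordinal.{v}) (k : ℕ) :
    (a ⨳ (k : Ordinal)) ⨳ b = (a ⨳ b) ⨳ (k : Ordinal) := by
  induction k with
  | zero => simp
  | succ k IH =>
    rw [Nat.cast_succ, nmul_add_one, nmul_add_one, nadd_nmul, IH]

end Ordinal

open NaturalOps Ordinal Order

/-- Key structural lemma proven by induction on `e`: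
(1) `ω ^ e` is closed under natural addition, and
(2) natural sum agrees with ordinary sum for `ω ^ e * q ♯ b` when `b < ω ^ e * ω`. -/
private theorem key_aux (e : Ordinal) :
    (∀ a b, a < ω ^ e → b < ω ^ e → a ♯ b < ω ^ e) ∧
    (∀ q b, b < ω ^ e * ω → ω ^ e * q ♯ b = ω ^ e * q + b) := by
  induction e using Ordinal.induction with
  | _ e IH =>
  have hpos : (0 : Ordinal) < ω ^ e := opow_pos e omega0_pos
  have hne : (ω : Ordinal) ^ e ≠ 0 := hpos.ne'
  -- Part 1 : closure of ω^e under ♯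
  have NP : ∀ a b, a < ω ^ e → b < ω ^ e → a ♯ b < ω ^ e := by
    rcases zero_or_succ_or_isSuccLimit e with rfl | ⟨f, rfl⟩ | he
    · intro a b ha hb
      rw [opow_zero, Ordinal.lt_one_iff_zero] at ha hb
      subst ha; subst hb; simpa using Ordinal.zero_lt_one
    · -- successor case
      intro a b ha hb
      have hf : f < succ f := lt_succ f
      obtain ⟨NPf, MSTf⟩ := IH f hf
      have hfpos : (0 : Ordinal) < ω ^ f := opow_pos f omega0_pos
      have hfne : (ω : Ordinal) ^ f ≠ 0 := hfpos.ne'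
      rw [opow_succ] at ha hb
      have hka : a / ω ^ f < ω := (div_lt hfne).2 ha
      have hkb : b / ω ^ f < ω := (div_lt hfne).2 hb
      have hsa : a % ω ^ f < ω ^ f := mod_lt a hfne
      have hsb : b % ω ^ f < ω ^ f := mod_lt b hfne
      set ka := a / ω ^ f
      set kb := b / ω ^ f
      set sa := a % ω ^ f
      set sb := b % ω ^ f
      have hsab : sa ♯ sb < ω ^ f := NPf sa sb hsa hsb
      have h1 : a ♯ b ≤ (ω ^ f * ka ♯ sa) ♯ (ω ^ f * kb ♯ sb) := by
        refine nadd_le_nadd ?_ ?_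
        · have := add_le_nadd (ω ^ f * ka) sa
          rwa [div_add_mod] at this
        · have := add_le_nadd (ω ^ f * kb) sb
          rwa [div_add_mod] at this
      have h2 : (ω ^ f * ka ♯ sa) ♯ (ω ^ f * kb ♯ sb)
          = ω ^ f * ka ♯ (ω ^ f * kb ♯ (sa ♯ sb)) := by
        rw [nadd_assoc, nadd_left_comm sa]
      have h3 : ω ^ f * kb ♯ (sa ♯ sb) = ω ^ f * kb + (sa ♯ sb) :=
        MSTf kb _ (hsab.trans_le (le_mul_left _ omega0_pos))
      have h4 : ω ^ f * kb + (sa ♯ sb) < ω ^ f * (kb + 1) := by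
        rw [mul_add, mul_one]
        exact add_lt_add_right hsab _
      have h5 : ω ^ f * ka ♯ (ω ^ f * kb + (sa ♯ sb))
          = ω ^ f * ka + (ω ^ f * kb + (sa ♯ sb)) := by
        refine MSTf ka _ (h4.trans ?_)
        exact mul_lt_mul_of_pos_left (principal_add_omega0 hkb one_lt_omega0) hfpos
      calc a ♯ b ≤ ω ^ f * ka + (ω ^ f * kb + (sa ♯ sb)) := by
            rw [← h5, ← h3, ← h2]; exact h1
        _ = ω ^ f * (ka + kb) + (sa ♯ sb) := by rw [← add_assoc, ← mul_add]
        _ < ω ^ (succ f) :=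
            opow_mul_add_lt_opow (principal_add_omega0 hka hkb) hsab (lt_succ f)
    · -- limit case
      intro a b ha hb
      rcases eq_or_ne a 0 with rfl | ha0
      · simpa [zero_nadd] using hb
      rcases eq_or_ne b 0 with rfl | hb0
      · simpa [nadd_zero] using ha
      have hla : log ω a < e := (lt_opow_iff_log_lt one_lt_omega0 ha0).1 ha
      have hlb : log ω b < e := (lt_opow_iff_log_lt one_lt_omega0 hb0).1 hb
      set f := max (succ (log ω a)) (succ (log ω b))
      have hf : f < e := max_lt (he.succ_lt hla) (he.succ_lt hlb)
      have ha' : a < ω ^ f :=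
        (lt_opow_succ_log_self one_lt_omega0 a).trans_le
          (opow_le_opow_right omega0_pos (le_max_left _ _))
      have hb' : b < ω ^ f :=
        (lt_opow_succ_log_self one_lt_omega0 b).trans_le
          (opow_le_opow_right omega0_pos (le_max_right _ _))
      exact ((IH f hf).1 a b ha' hb').trans_le (opow_le_opow_right omega0_pos hf.le)
  -- Part 2a : the case of a finite multiple of ω^e and a remainder < ω^e
  have MF0 : ∀ q, q < ω → ∀ y, y < ω ^ e → ω ^ e * q ♯ y = ω ^ e * q + y := by
    intro q
    induction q using Ordinal.induction with
    | _ q IHq =>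
    intro hq y
    induction y using Ordinal.induction with
    | _ y IHy =>
    intro hy
    refine le_antisymm (nadd_le_iff.2 ⟨?_, ?_⟩) (add_le_nadd _ _)
    · intro a' ha'
      have hp : a' / ω ^ e < q := (div_lt hne).2 ha'
      have ht : a' % ω ^ e < ω ^ e := mod_lt a' hne
      have hty : a' % ω ^ e ♯ y < ω ^ e := NP _ _ ht hy
      calc a' ♯ y ≤ (ω ^ e * (a' / ω ^ e) ♯ a' % ω ^ e) ♯ y := by
            refine nadd_le_nadd_right ?_ y
            have := add_le_nadd (ω ^ e * (a' / ω ^ e)) (a' % ω ^ e)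
            rwa [div_add_mod] at this
        _ = ω ^ e * (a' / ω ^ e) ♯ (a' % ω ^ e ♯ y) := nadd_assoc _ _ _
        _ = ω ^ e * (a' / ω ^ e) + (a' % ω ^ e ♯ y) := IHq _ hp (hp.trans hq) _ hty
        _ < ω ^ e * (a' / ω ^ e) + ω ^ e := add_lt_add_right hty _
        _ = ω ^ e * (a' / ω ^ e + 1) := by rw [mul_add, mul_one]
        _ ≤ ω ^ e * q := by
            refine mul_le_mul_right ?_ _
            rw [add_one_eq_succ]; exact succ_le_of_lt hp
        _ ≤ ω ^ e * q + y := le_self_add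
    · intro y' hy'
      rw [IHy y' hy' (hy'.trans hy)]
      exact add_lt_add_right hy' _
  -- Part 2b : a small term naturally added to b < ω^e * ω stays below ω^e + b
  have SM : ∀ t b, t < ω ^ e → b < ω ^ e * ω →
      t ♯ b < ω ^ e + b ∧ ω ^ e + b < ω ^ e * ω := by
    intro t b ht hb
    have hk : b / ω ^ e < ω := (div_lt hne).2 hb
    have hs : b % ω ^ e < ω ^ e := mod_lt b hne
    have hts : t ♯ b % ω ^ e < ω ^ e := NP _ _ ht hs
    have hbk : ω ^ e * (b / ω ^ e) ≤ b := mul_div_le b _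
    obtain ⟨m, hm⟩ := lt_omega0.1 hk
    constructor
    · calc t ♯ b ≤ t ♯ (ω ^ e * (b / ω ^ e) ♯ b % ω ^ e) := by
            refine nadd_le_nadd_left ?_ t
            have := add_le_nadd (ω ^ e * (b / ω ^ e)) (b % ω ^ e)
            rwa [div_add_mod] at this
        _ = ω ^ e * (b / ω ^ e) ♯ (t ♯ b % ω ^ e) := nadd_left_comm _ _ _
        _ = ω ^ e * (b / ω ^ e) + (t ♯ b % ω ^ e) := MF0 _ hk _ hts
        _ < ω ^ e * (b / ω ^ e) + ω ^ e := add_lt_add_right hts _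
        _ = ω ^ e * (b / ω ^ e + 1) := by rw [mul_add, mul_one]
        _ = ω ^ e * (1 + b / ω ^ e) := by
            congr 1
            rw [hm]
            norm_cast
            omega
        _ = ω ^ e + ω ^ e * (b / ω ^ e) := by rw [mul_add, mul_one]
        _ ≤ ω ^ e + b := add_le_add_right hbk _
    · have hb' : b < ω ^ e * (b / ω ^ e + 1) := by
        rw [mul_add, mul_one]
        conv_lhs => rw [← div_add_mod b (ω ^ e)]
        exact add_lt_add_right hs _
      calc ω ^ e + b < ω ^ e + ω ^ e * (b / ω ^ e + 1) := add_lt_add_right hb' _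
        _ = ω ^ e * (1 + (b / ω ^ e + 1)) := by
            simp only [mul_add, mul_one]
        _ < ω ^ e * ω := by
            refine mul_lt_mul_of_pos_left ?_ hpos
            rw [hm]
            have : ((1 + (m + 1) : ℕ) : Ordinal) = 1 + ((m : Ordinal) + 1) := by
              push_cast; ring
            rw [← this]
            exact nat_lt_omega0 _
  -- Part 2 : full statement
  have MST : ∀ q b, b < ω ^ e * ω → ω ^ e * q ♯ b = ω ^ e * q + b := by
    intro q
    induction q using Ordinal.induction with
    | _ q IHq =>
    intro b
    induction b using Ordinal.induction with
    | _ b IHb =>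
    intro hb
    refine le_antisymm (nadd_le_iff.2 ⟨?_, ?_⟩) (add_le_nadd _ _)
    · intro a' ha'
      have hp : a' / ω ^ e < q := (div_lt hne).2 ha'
      have ht : a' % ω ^ e < ω ^ e := mod_lt a' hne
      obtain ⟨hsm1, hsm2⟩ := SM (a' % ω ^ e) b ht hb
      calc a' ♯ b ≤ (ω ^ e * (a' / ω ^ e) ♯ a' % ω ^ e) ♯ b := by
            refine nadd_le_nadd_right ?_ b
            have := add_le_nadd (ω ^ e * (a' / ω ^ e)) (a' % ω ^ e)
            rwa [div_add_mod] at this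
        _ = ω ^ e * (a' / ω ^ e) ♯ (a' % ω ^ e ♯ b) := nadd_assoc _ _ _
        _ = ω ^ e * (a' / ω ^ e) + (a' % ω ^ e ♯ b) :=
            IHq _ hp _ (hsm1.trans hsm2)
        _ < ω ^ e * (a' / ω ^ e) + (ω ^ e + b) := add_lt_add_right hsm1 _
        _ = ω ^ e * (a' / ω ^ e + 1) + b := by
            rw [mul_add, mul_one, add_assoc]
        _ ≤ ω ^ e * q + b := by
            refine add_le_add_left (mul_le_mul_right ?_ _) b
            rw [add_one_eq_succ]; exact succ_le_of_lt hp
    · intro b' hb'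
      rw [IHb b' hb' (hb'.trans hb)]
      exact add_lt_add_right hb' _
  exact ⟨NP, MST⟩

private theorem nadd_lt_opow (e : Ordinal) {a b : Ordinal}
    (ha : a < ω ^ e) (hb : b < ω ^ e) : a ♯ b < ω ^ e :=
  (key_aux e).1 a b ha hb

private theorem mul_nadd_eq (e : Ordinal) (q : Ordinal) {b : Ordinal}
    (hb : b < ω ^ e * ω) : ω ^ e * q ♯ b = ω ^ e * q + b :=
  (key_aux e).2 q b hb

private theorem opow_lt_mul_omega (e : Ordinal) : ω ^ e < ω ^ e * ω := by
  have := mul_lt_mul_of_pos_left one_lt_omega0 (opow_pos e omega0_pos)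
  rwa [mul_one] at this

/-- `ω ^ e ⨳ n = ω ^ e * n` for natural `n`. -/
private theorem opow_nmul_nat (e : Ordinal) (n : ℕ) :
    (ω ^ e) ⨳ (n : Ordinal) = ω ^ e * n := by
  induction n with
  | zero => simp [nmul_zero]
  | succ n IHn =>
    have hcast : ((n + 1 : ℕ) : Ordinal) = (n : Ordinal) + 1 := by push_cast; ring
    rw [hcast, nmul_add_one, IHn, mul_nadd_eq e n (opow_lt_mul_omega e), mul_add, mul_one]

/-- `ω ^ e ⨳ ω ≤ ω ^ (e + 1)`. -/
private theorem opow_nmul_omega_le (e : Ordinal) : (ω ^ e) ⨳ ω ≤ ω ^ (e + 1) := by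
  induction e using Ordinal.induction with
  | _ e IH =>
  refine nmul_le_iff.2 fun x hx m hm => ?_
  obtain ⟨m', rfl⟩ := lt_omega0.1 hm
  have h1 : (ω ^ e) ⨳ (m' : Ordinal) < ω ^ (e + 1) := by
    rw [opow_nmul_nat, add_one_eq_succ, opow_succ]
    exact mul_lt_mul_of_pos_left (nat_lt_omega0 m') (opow_pos e omega0_pos)
  have h2 : x ⨳ ω < ω ^ (e + 1) := by
    rcases eq_or_ne x 0 with rfl | hx0
    · rw [zero_nmul]
      exact opow_pos _ omega0_pos
    · have hf : log ω x < e := (lt_opow_iff_log_lt one_lt_omega0 hx0).1 hx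
      set f := log ω x
      obtain ⟨k, hk1, hk2⟩ : ∃ k < ω, x < ω ^ f * k := by
        refine (lt_mul_iff_of_isSuccLimit isSuccLimit_omega0).1 ?_
        rw [← opow_succ, ← add_one_eq_succ]
        exact lt_opow_succ_log_self one_lt_omega0 x
      obtain ⟨k', rfl⟩ := lt_omega0.1 hk1
      have hfe : f + 1 ≤ e := by
        rw [add_one_eq_succ]; exact succ_le_of_lt hf
      calc x ⨳ ω ≤ (ω ^ f * k') ⨳ ω := nmul_le_nmul_right hk2.le ω
        _ = ((ω ^ f) ⨳ (k' : Ordinal)) ⨳ ω := by rw [opow_nmul_nat]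
        _ = ((ω ^ f) ⨳ ω) ⨳ (k' : Ordinal) := by
            rw [nmul_nat_nmul_comm]
        _ ≤ (ω ^ (f + 1)) ⨳ (k' : Ordinal) := nmul_le_nmul_right (IH f hf) _
        _ = ω ^ (f + 1) * k' := opow_nmul_nat _ _
        _ < ω ^ (f + 1) * ω := mul_lt_mul_of_pos_left (nat_lt_omega0 k')
            (opow_pos _ omega0_pos)
        _ = ω ^ (f + 1 + 1) := by rw [add_one_eq_succ (f + 1), opow_succ]
        _ ≤ ω ^ (e + 1) := opow_le_opow_right omega0_pos (add_le_add_left hfe 1)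
  exact (nadd_lt_opow (e + 1) h2 h1).trans_le le_self_nadd

/-- For all ordinals `ε`, `δ` and every natural number `n`,
`(ε ⨳ ω) ♯ (δ ⨳ n) ≤ (ε + δ) ⨳ ω`. -/
theorem nmul_omega_nadd_nmul_nat_le
    (ε δ : Ordinal) (n : ℕ) :
    (ε ⨳ ω) ♯ (δ ⨳ (n : Ordinal)) ≤ (ε + δ) ⨳ ω := by
  rcases eq_or_ne δ 0 with rfl | hδ
  · simp [zero_nmul, nadd_zero]
  set e := log ω δ with he
  have hδ1 : ω ^ e ≤ δ := opow_log_le_self ω hδ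
  have hδ2 : δ < ω ^ (e + 1) := by
    rw [add_one_eq_succ]; exact lt_opow_succ_log_self one_lt_omega0 δ
  have hδ2' : δ < ω ^ e * ω := by rwa [add_one_eq_succ, opow_succ] at hδ2
  have hne : (ω : Ordinal) ^ e ≠ 0 := (opow_pos e omega0_pos).ne'
  set q := ε / ω ^ e with hq
  set ε₂ := ε % ω ^ e with hε₂
  have hε₂lt : ε₂ < ω ^ e := mod_lt ε hne
  have hsplit : ε = ω ^ e * q + ε₂ := (div_add_mod ε _).symm
  have hεnadd : ε = ω ^ e * q ♯ ε₂ := by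
    rw [mul_nadd_eq e q (hε₂lt.trans_le (le_mul_left _ omega0_pos))]
    exact hsplit
  have hsum : ε + δ = ω ^ e * q ♯ δ := by
    rw [mul_nadd_eq e q hδ2', hsplit, add_assoc, add_absorp hε₂lt hδ1]
  have hb1 : ε₂ ⨳ ω < ω ^ (e + 1) := by
    have h1 : ε₂ ⨳ ω < (ε₂ ♯ 1) ⨳ ω := by
      rw [nadd_one_nmul]
      simpa using nadd_lt_nadd_left omega0_pos (ε₂ ⨳ ω)
    have h2 : ε₂ ♯ 1 ≤ ω ^ e := by
      rw [nadd_one]; exact succ_le_of_lt hε₂lt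
    exact h1.trans_le ((nmul_le_nmul_right h2 ω).trans (opow_nmul_omega_le e))
  have hb2 : δ ⨳ (n : Ordinal) < ω ^ (e + 1) := by
    induction n with
    | zero => simpa [nmul_zero] using opow_pos (e + 1) omega0_pos
    | succ k IHk =>
      have hcast : ((k + 1 : ℕ) : Ordinal) = (k : Ordinal) + 1 := by push_cast; ring
      rw [hcast, nmul_add_one]
      exact nadd_lt_opow (e + 1) IHk hδ2
  have hb3 : ω ^ (e + 1) ≤ δ ⨳ ω := by
    calc ω ^ (e + 1) = ω ^ e * ω := by rw [add_one_eq_succ, opow_succ]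
      _ ≤ δ * ω := mul_le_mul_left hδ1 ω
      _ ≤ δ ⨳ ω := mul_le_nmul δ ω
  have hmain : ε₂ ⨳ ω ♯ δ ⨳ (n : Ordinal) ≤ δ ⨳ ω :=
    ((nadd_lt_opow (e + 1) hb1 hb2).trans_le hb3).le
  calc (ε ⨳ ω) ♯ (δ ⨳ (n : Ordinal))
      = ((ω ^ e * q) ⨳ ω ♯ ε₂ ⨳ ω) ♯ δ ⨳ (n : Ordinal) := by
        rw [← nadd_nmul, ← hεnadd]
    _ = (ω ^ e * q) ⨳ ω ♯ (ε₂ ⨳ ω ♯ δ ⨳ (n : Ordinal)) := nadd_assoc _ _ _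
    _ ≤ (ω ^ e * q) ⨳ ω ♯ δ ⨳ ω := nadd_le_nadd_left hmain _
    _ = (ω ^ e * q ♯ δ) ⨳ ω := (nadd_nmul _ _ _).symm
    _ = (ε + δ) ⨳ ω := by rw [← hsum]
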